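/- arXiv:1711.09650 — 2 statements merged into one kernel-verified Lean document; each statement's English description precedes it below -/
import Mathlib

section
/- Let λ > 0 and let φ ∈ P^r satisfy φ' − λ φ − L̂(φ(t₁)) = L(1) on I. Then the maximum of |φ| over the closed interval [t₀, t₁] is attained at the left endpoint, i.e. sup_{t∈[t₀,t₁]} |φ(t)| = |φ(t₀)|, and moreover −1 < φ(t₀) < 0. -/
/-!
Testing the dual equation against `V ∈ P^r` and integrating by parts gives
`∫ φ (V' + λ V) = -(1 + φ(t₀)) V(t₀)`. For `V = W_j`, the polynomial solution of
`W_j' + λ W_j = K_j`, this identifies the Legendre coefficients of `φ`, so that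
`φ = -(1 + φ(t₀)) Ψ` for a polynomial `Ψ` independent of `φ`, with coefficients
`(2j + 1)/k · W_j(t₀)`. Since `W_j = ∑ₙ (-1)ⁿ λ⁻ⁿ⁻¹ K_j⁽ⁿ⁾` and the derivatives of a Legendre
polynomial alternate in sign at the left endpoint, `(-1)^j W_j(t₀) > 0`; together with
`K_j(t₀) = (-1)^j` and `|K_j| ≤ 1` this makes `|Ψ|` maximal at `t₀`, with `Ψ(t₀) > 0`.
Solving `φ(t₀) = -(1 + φ(t₀)) Ψ(t₀)` gives `φ(t₀) = -Ψ(t₀) / (1 + Ψ(t₀)) ∈ (-1, 0)`.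
Legendre's equation, which yields both facts about `K_j`, is derived from orthogonality.
-/

open Polynomial MeasureTheory intervalIntegral

/-- The rescaled Legendre polynomials on `[t₀, t₁]`: `K i` has degree `i`,
`K i (t₁) = 1`, `K i (t₀) = (-1)^i`, and they are `L²(t₀,t₁)`-orthogonal with
`∫ K i ^ 2 = (t₁ - t₀)/(2 i + 1)`. -/
def IsLegendreBasis (t₀ t₁ : ℝ) (K : ℕ → Polynomial ℝ) : Prop :=
  (∀ i, (K i).natDegree = i) ∧ (∀ i, (K i).eval t₁ = 1) ∧
  (∀ i, (K i).eval t₀ = (-1 : ℝ) ^ i) ∧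
  (∀ i j, (∫ t in t₀..t₁, (K i).eval t * (K j).eval t) =
    if i = j then (t₁ - t₀) / (2 * (i : ℝ) + 1) else 0)

/-- The lifting operator `L(z) = (z/k) ∑_{i=0}^r (-1)^i (2i+1) K_i`. -/
noncomputable def Lop (t₀ t₁ : ℝ) (r : ℕ) (K : ℕ → Polynomial ℝ) (z : ℝ) : Polynomial ℝ :=
  Polynomial.C (z / (t₁ - t₀)) *
    ∑ i ∈ Finset.range (r + 1), Polynomial.C ((-1 : ℝ) ^ i * (2 * (i : ℝ) + 1)) * K i

/-- The endpoint lifting operator `L̂(z) = (z/k) ∑_{i=0}^r (2i+1) K_i`. -/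
noncomputable def LopE (t₀ t₁ : ℝ) (r : ℕ) (K : ℕ → Polynomial ℝ) (z : ℝ) : Polynomial ℝ :=
  Polynomial.C (z / (t₁ - t₀)) *
    ∑ i ∈ Finset.range (r + 1), Polynomial.C (2 * (i : ℝ) + 1) * K i

/-- The scalar dG operator `Γ_λ(v) = v' + L(v(t₀)) + λ v`. -/
noncomputable def Gam (t₀ t₁ : ℝ) (r : ℕ) (K : ℕ → Polynomial ℝ) (lam : ℝ)
    (v : Polynomial ℝ) : Polynomial ℝ :=
  Polynomial.derivative v + Lop t₀ t₁ r K (v.eval t₀) + Polynomial.C lam * v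

open Finset

lemma le_max_of_deriv_nonpos_of_deriv_nonneg {f : ℝ → ℝ} (hf : Differentiable ℝ f)
    {a m b t : ℝ} (hleft : ∀ x ∈ Set.Ioo a m, deriv f x ≤ 0)
    (hright : ∀ x ∈ Set.Ioo m b, 0 ≤ deriv f x) (ht : t ∈ Set.Icc a b) :
    f t ≤ max (f a) (f b) := by
  rcases le_total t m with htm | htm
  · refine le_max_of_le_left <| antitoneOn_of_deriv_nonpos (convex_Icc a m)
      hf.continuous.continuousOn hf.differentiableOn (by rwa [interior_Icc])
      ⟨le_rfl, ht.1.trans htm⟩ ⟨ht.1, htm⟩ ht.1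
  · refine le_max_of_le_right <| monotoneOn_of_deriv_nonneg (convex_Icc m b)
      hf.continuous.continuousOn hf.differentiableOn (by rwa [interior_Icc])
      ⟨htm, ht.2⟩ ⟨htm.trans ht.2, le_rfl⟩ ht.2

namespace Polynomial

section Field

variable {R : Type*} [Field R]

/-- The Neumann series `(μ + d/dt)⁻¹ = ∑ₙ (-1)ⁿ μ⁻ⁿ⁻¹ (d/dt)ⁿ`, which terminates on
polynomials. -/
noncomputable def derivativeResolvent (μ : R) (p : R[X]) : R[X] :=
  ∑ n ∈ range (p.natDegree + 1), C ((-1) ^ n * μ⁻¹ ^ (n + 1)) * derivative^[n] p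

lemma natDegree_derivativeResolvent_le (μ : R) (p : R[X]) :
    (derivativeResolvent μ p).natDegree ≤ p.natDegree :=
  natDegree_sum_le_of_forall_le _ _ fun n _ =>
    (natDegree_C_mul_le _ _).trans ((natDegree_iterate_derivative p n).trans (Nat.sub_le _ _))

lemma derivative_derivativeResolvent_add {μ : R} (hμ : μ ≠ 0) (p : R[X]) :
    derivative (derivativeResolvent μ p) + C μ * derivativeResolvent μ p = p := by
  set u : ℕ → R[X] := fun n => C ((-1) ^ n * μ⁻¹ ^ n) * derivative^[n] p
  have htelescope : ∀ n ∈ range (p.natDegree + 1),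
      derivative (C ((-1) ^ n * μ⁻¹ ^ (n + 1)) * derivative^[n] p)
        + C μ * (C ((-1) ^ n * μ⁻¹ ^ (n + 1)) * derivative^[n] p) = u n - u (n + 1) := by
    intro n _
    simp only [u, derivative_C_mul, ← Function.iterate_succ_apply' derivative, ← mul_assoc,
      ← C_mul]
    rw [sub_eq_add_neg, add_comm, ← neg_mul, ← C_neg]
    congr 3
    · linear_combination ((-1) ^ n * μ⁻¹ ^ n) * mul_inv_cancel₀ hμ
    · ring
  rw [derivativeResolvent, derivative_sum, mul_sum, ← sum_add_distrib,
    sum_congr rfl htelescope, sum_range_sub' u]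
  simp [u, iterate_derivative_eq_zero (Nat.lt_succ_self _)]

lemma exists_eq_sum_C_mul_of_degree_lt {K : ℕ → R[X]}
    (hdeg : ∀ i, (K i).natDegree = i) (hne : ∀ i, K i ≠ 0) :
    ∀ (m : ℕ) (p : R[X]), p.degree < m → ∃ c : ℕ → R, p = ∑ i ∈ range m, C (c i) * K i
  | 0, p, hp => ⟨0, by simpa using hp⟩
  | m + 1, p, hp => by
    set d := p.coeff m / (K m).leadingCoeff
    have hlc : (K m).leadingCoeff ≠ 0 := leadingCoeff_ne_zero.2 (hne m)
    have hrest : (p - C d * K m).degree < m := by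
      rw [degree_lt_iff_coeff_zero]
      intro k hk
      rw [coeff_sub, coeff_C_mul]
      rcases hk.eq_or_lt with rfl | hk
      · rw [show (K m).coeff m = (K m).leadingCoeff by rw [leadingCoeff, hdeg],
          div_mul_cancel₀ _ hlc, sub_self]
      · rw [(degree_lt_iff_coeff_zero p (m + 1)).1 hp k hk,
          coeff_eq_zero_of_natDegree_lt (by rwa [hdeg]), mul_zero, sub_zero]
    obtain ⟨c, hc⟩ := exists_eq_sum_C_mul_of_degree_lt hdeg hne m _ hrest
    refine ⟨Function.update c m d, ?_⟩
    rw [sum_range_succ, Function.update_self, sum_congr rfl fun i hi =>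
      by rw [Function.update_of_ne (mem_range.1 hi).ne], ← hc, sub_add_cancel]

end Field

noncomputable def intervalPairing (a b : ℝ) (p q : ℝ[X]) : ℝ :=
  ∫ t in a..b, p.eval t * q.eval t

section Interval

variable {a b : ℝ}

lemma intervalIntegrable_eval_mul_eval (p q : ℝ[X]) :
    IntervalIntegrable (fun t => p.eval t * q.eval t) volume a b :=
  (p.continuous.mul q.continuous).intervalIntegrable a b

lemma intervalPairing_comm (p q : ℝ[X]) :
    intervalPairing a b p q = intervalPairing a b q p := by
  simp only [intervalPairing, mul_comm]

lemma intervalPairing_add_left (p q s : ℝ[X]) :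
    intervalPairing a b (p + q) s = intervalPairing a b p s + intervalPairing a b q s := by
  simp only [intervalPairing, eval_add, add_mul]
  exact integral_add (intervalIntegrable_eval_mul_eval p s)
    (intervalIntegrable_eval_mul_eval q s)

lemma intervalPairing_sub_left (p q s : ℝ[X]) :
    intervalPairing a b (p - q) s = intervalPairing a b p s - intervalPairing a b q s := by
  simp only [intervalPairing, eval_sub, sub_mul]
  exact integral_sub (intervalIntegrable_eval_mul_eval p s)
    (intervalIntegrable_eval_mul_eval q s)

lemma intervalPairing_C_mul_left (c : ℝ) (p q : ℝ[X]) :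
    intervalPairing a b (C c * p) q = c * intervalPairing a b p q := by
  simp only [intervalPairing, eval_mul, eval_C, mul_assoc]
  exact integral_const_mul c _

lemma intervalPairing_sum_left {ι : Type*} (s : Finset ι) (f : ι → ℝ[X]) (q : ℝ[X]) :
    intervalPairing a b (∑ i ∈ s, f i) q = ∑ i ∈ s, intervalPairing a b (f i) q := by
  simp only [intervalPairing, eval_finsetSum, sum_mul]
  exact integral_finsetSum fun i _ => intervalIntegrable_eval_mul_eval (f i) q

lemma integral_eval_derivative (p : ℝ[X]) :
    ∫ t in a..b, (derivative p).eval t = p.eval b - p.eval a :=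
  integral_eq_sub_of_hasDerivAt (fun x _ => p.hasDerivAt x)
    ((derivative p).continuous.intervalIntegrable a b)

lemma intervalPairing_derivative_add (p q : ℝ[X]) :
    intervalPairing a b (derivative p) q + intervalPairing a b p (derivative q)
      = p.eval b * q.eval b - p.eval a * q.eval a := by
  simp only [intervalPairing]
  rw [← integral_add (intervalIntegrable_eval_mul_eval _ _)
      (intervalIntegrable_eval_mul_eval _ _), ← eval_mul, ← eval_mul,
    ← integral_eval_derivative (p * q)]
  simp only [derivative_mul, eval_add, eval_mul]

noncomputable def bubble (a b : ℝ) : ℝ[X] := (X - C a) * (C b - X)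

/-- `p ↦ ((t - a)(b - t) p')'`, the Legendre differential operator transported to `[a, b]`. -/
noncomputable def legendreOperator (a b : ℝ) (p : ℝ[X]) : ℝ[X] :=
  derivative (bubble a b * derivative p)

lemma eval_bubble (x : ℝ) : (bubble a b).eval x = (x - a) * (b - x) := by
  simp [bubble]

lemma bubble_eq : bubble a b = C (a + b) * X - X ^ 2 - C (a * b) := by
  simp only [bubble, C_add, C_mul]; ring

lemma derivative_bubble : derivative (bubble a b) = C (a + b) - 2 * X := by
  rw [bubble_eq]
  simp only [derivative_sub, derivative_C_mul_X, derivative_X_pow, derivative_C]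
  norm_num [map_ofNat]

lemma eval_derivative_bubble (x : ℝ) : (derivative (bubble a b)).eval x = a + b - 2 * x := by
  simp [derivative_bubble]

lemma natDegree_legendreOperator_le (p : ℝ[X]) :
    (legendreOperator a b p).natDegree ≤ p.natDegree := by
  by_cases hp : derivative p = 0
  · simp [legendreOperator, hp]
  have hp₀ : p.natDegree ≠ 0 := fun h => hp (by rw [eq_C_of_natDegree_eq_zero h, derivative_C])
  have hbubble : (bubble a b).natDegree ≤ 2 := by rw [bubble_eq]; compute_degree
  have := natDegree_derivative_le (bubble a b * derivative p)
  have := natDegree_mul_le (p := bubble a b) (q := derivative p)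
  have := natDegree_derivative_le p
  unfold legendreOperator
  omega

lemma coeff_legendreOperator {p : ℝ[X]} {n : ℕ} (hp : p.natDegree ≤ n) :
    (legendreOperator a b p).coeff n = -(n * (n + 1)) * p.coeff n := by
  rcases n with _ | m
  · obtain ⟨c, rfl⟩ : ∃ c, p = C c := ⟨_, eq_C_of_natDegree_le_zero hp⟩
    simp [legendreOperator]
  have hvanish : ∀ k, m + 1 < k → p.coeff k = 0 := fun k hk =>
    coeff_eq_zero_of_natDegree_lt (hp.trans_lt hk)
  have hlead : (bubble a b * derivative p).coeff (m + 2) = -((m + 1) * p.coeff (m + 1)) := by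
    rw [bubble_eq, sub_mul, sub_mul, coeff_sub, coeff_sub, mul_assoc, coeff_C_mul, coeff_C_mul,
      coeff_X_mul, coeff_X_pow_mul, coeff_derivative, coeff_derivative, coeff_derivative,
      hvanish (m + 1 + 1) (by omega), hvanish (m + 2 + 1) (by omega)]
    push_cast
    ring
  rw [legendreOperator, coeff_derivative, hlead]
  push_cast
  ring

lemma intervalPairing_legendreOperator_left (p q : ℝ[X]) :
    intervalPairing a b (legendreOperator a b p) q
      = -intervalPairing a b (bubble a b * derivative p) (derivative q) := by
  have h := intervalPairing_derivative_add (a := a) (b := b) (bubble a b * derivative p) q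
  simp only [eval_mul, eval_bubble, sub_self, mul_zero, zero_mul] at h
  rw [legendreOperator]
  linarith

lemma intervalPairing_legendreOperator_comm (p q : ℝ[X]) :
    intervalPairing a b (legendreOperator a b p) q
      = intervalPairing a b (legendreOperator a b q) p := by
  rw [intervalPairing_legendreOperator_left, intervalPairing_legendreOperator_left]
  simp only [intervalPairing, eval_mul]
  congr 2
  ext t
  ring

lemma iterate_derivative_of_legendreOperator_eq {p : ℝ[X]} {α : ℝ}
    (hp : legendreOperator a b p = -C α * p) (n : ℕ) :
    bubble a b * derivative^[n + 2] p
        + C (n + 1 : ℝ) * (derivative (bubble a b) * derivative^[n + 1] p)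
      = C (n * (n + 1) - α) * derivative^[n] p := by
  induction n with
  | zero =>
    rw [legendreOperator, derivative_mul] at hp
    simp only [Function.iterate_succ_apply, Function.iterate_zero_apply, Nat.cast_zero] at hp ⊢
    simp only [map_sub, map_mul, map_add, map_zero, map_one]
    linear_combination hp
  | succ n ih =>
    have h := congrArg derivative ih
    simp only [derivative_add, derivative_mul, derivative_C, zero_mul, zero_add,
      ← Function.iterate_succ_apply' derivative, derivative_bubble] at h
    simp only [derivative_sub, derivative_C, derivative_mul, derivative_X, derivative_ofNat] at h
    rw [derivative_bubble]
    push_cast at h ⊢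
    simp only [map_add, map_sub, map_mul, map_one, map_natCast] at h ⊢
    linear_combination h

lemma neg_one_pow_mul_eval_iterate_derivative_pos (hab : a < b) {p : ℝ[X]} {j : ℕ}
    (hp : legendreOperator a b p = -C (j * (j + 1) : ℝ) * p) (hpa : 0 < (-1) ^ j * p.eval a) :
    ∀ n ≤ j, 0 < (-1) ^ (j + n) * (derivative^[n] p).eval a := by
  intro n
  induction n with
  | zero => simpa using hpa
  | succ n ih =>
    intro hn
    have hrec := congrArg (eval a) (iterate_derivative_of_legendreOperator_eq hp n)
    simp only [eval_add, eval_mul, eval_C, eval_bubble, eval_derivative_bubble, sub_self,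
      zero_mul, zero_add] at hrec
    have hfactor : (n * (n + 1) - j * (j + 1) : ℝ) < 0 := by
      have : (n : ℝ) + 1 ≤ j := by exact_mod_cast hn
      nlinarith
    have hscaled : (n + 1) * (b - a) * ((-1) ^ (j + n) * (derivative^[n + 1] p).eval a)
        = (n * (n + 1) - j * (j + 1)) * ((-1) ^ (j + n) * (derivative^[n] p).eval a) := by
      linear_combination (-1 : ℝ) ^ (j + n) * hrec
    have hneg : (-1) ^ (j + n) * (derivative^[n + 1] p).eval a < 0 :=
      neg_of_mul_neg_right (hscaled ▸ mul_neg_of_neg_of_pos hfactor (ih (by omega)))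
        (by have := sub_pos.2 hab; positivity)
    rw [← add_assoc, pow_succ]
    linarith

lemma sq_eval_le_max_of_legendreOperator_eq {p : ℝ[X]} {α : ℝ} (hα : 0 < α)
    (hp : legendreOperator a b p = -C α * p) {t : ℝ} (ht : t ∈ Set.Icc a b) :
    p.eval t ^ 2 ≤ max (p.eval a ^ 2) (p.eval b ^ 2) := by
  set E : ℝ[X] := C α * p ^ 2 + bubble a b * derivative p ^ 2
  have hE : derivative E = -(derivative (bubble a b) * derivative p ^ 2) := by
    rw [legendreOperator, derivative_mul] at hp
    simp only [E, derivative_add, derivative_mul, derivative_C, derivative_sq, zero_mul, zero_add,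
      map_ofNat]
    linear_combination (2 * derivative p) * hp
  have hE_eval : ∀ x,
      E.eval x = α * p.eval x ^ 2 + (x - a) * (b - x) * (derivative p).eval x ^ 2 := by
    simp [E, eval_bubble]
  have hmax := le_max_of_deriv_nonpos_of_deriv_nonneg E.differentiable (m := (a + b) / 2)
    (fun x hx => ?_) (fun x hx => ?_) ht
  · simp only [hE_eval, sub_self, mul_zero, zero_mul, add_zero, ← mul_max_of_nonneg _ _ hα.le]
      at hmax
    have hbubble : 0 ≤ (t - a) * (b - t) * (derivative p).eval t ^ 2 :=
      mul_nonneg (mul_nonneg (sub_nonneg.2 ht.1) (sub_nonneg.2 ht.2)) (sq_nonneg _)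
    exact le_of_mul_le_mul_left (by linarith) hα
  all_goals
    rw [Polynomial.deriv, hE, eval_neg, eval_mul, eval_pow, eval_derivative_bubble]
    nlinarith [hx.1, hx.2, sq_nonneg ((derivative p).eval x)]

end Interval

end Polynomial

namespace IsLegendreBasis

variable {t₀ t₁ : ℝ} {K : ℕ → ℝ[X]}

lemma ne_zero (hK : IsLegendreBasis t₀ t₁ K) (i : ℕ) : K i ≠ 0 := fun h => by
  simpa [h] using hK.2.1 i

lemma intervalPairing_sum_C_mul_left (hK : IsLegendreBasis t₀ t₁ K) (m : ℕ) (c : ℕ → ℝ)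
    (j : ℕ) :
    intervalPairing t₀ t₁ (∑ i ∈ range m, C (c i) * K i) (K j)
      = if j ∈ range m then c j * ((t₁ - t₀) / (2 * j + 1)) else 0 := by
  simp only [intervalPairing_sum_left, intervalPairing_C_mul_left]
  simp only [intervalPairing, hK.2.2.2, mul_ite, mul_zero, sum_ite_eq']

lemma eq_sum_legendreCoeff (hK : IsLegendreBasis t₀ t₁ K) (ht : t₀ ≠ t₁) {m : ℕ} {p : ℝ[X]}
    (hp : p.degree < m) :
    p = ∑ i ∈ range m, C ((2 * i + 1) / (t₁ - t₀) * intervalPairing t₀ t₁ p (K i)) * K i := by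
  obtain ⟨c, rfl⟩ := exists_eq_sum_C_mul_of_degree_lt hK.1 hK.ne_zero m p hp
  refine sum_congr rfl fun i hi => ?_
  rw [hK.intervalPairing_sum_C_mul_left, if_pos hi]
  have : t₁ - t₀ ≠ 0 := sub_ne_zero.2 ht.symm
  field_simp

lemma eq_zero_of_degree_lt_of_intervalPairing_eq_zero (hK : IsLegendreBasis t₀ t₁ K)
    (ht : t₀ ≠ t₁) {m : ℕ} {p : ℝ[X]} (hp : p.degree < m)
    (horth : ∀ i < m, intervalPairing t₀ t₁ p (K i) = 0) : p = 0 := by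
  rw [hK.eq_sum_legendreCoeff ht hp]
  exact sum_eq_zero fun i hi => by simp [horth i (mem_range.1 hi)]

lemma intervalPairing_eq_zero_of_natDegree_lt (hK : IsLegendreBasis t₀ t₁ K) (ht : t₀ ≠ t₁)
    {p : ℝ[X]} {j : ℕ} (hp : p.natDegree < j) : intervalPairing t₀ t₁ p (K j) = 0 := by
  rw [hK.eq_sum_legendreCoeff (p := p) ht ((degree_le_natDegree).trans_lt (by exact_mod_cast hp)),
    hK.intervalPairing_sum_C_mul_left, if_neg (by simp)]

noncomputable def evalKernel (t₀ t₁ : ℝ) (r : ℕ) (K : ℕ → ℝ[X]) (x : ℝ) : ℝ[X] :=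
  ∑ i ∈ range (r + 1), C ((2 * i + 1) / (t₁ - t₀) * (K i).eval x) * K i

lemma intervalPairing_evalKernel (hK : IsLegendreBasis t₀ t₁ K) (ht : t₀ ≠ t₁) {r : ℕ} (x : ℝ)
    {V : ℝ[X]} (hV : V.natDegree ≤ r) :
    intervalPairing t₀ t₁ (evalKernel t₀ t₁ r K x) V = V.eval x := by
  conv_rhs => rw [hK.eq_sum_legendreCoeff ht
    ((degree_le_of_natDegree_le hV).trans_lt (by exact_mod_cast Nat.lt_succ_self r))]
  simp only [evalKernel, intervalPairing_sum_left, intervalPairing_C_mul_left, eval_finsetSum,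
    eval_mul, eval_C]
  refine sum_congr rfl fun i _ => ?_
  rw [intervalPairing_comm]
  ring

lemma Lop_eq_C_mul_evalKernel (hK : IsLegendreBasis t₀ t₁ K) (r : ℕ) (z : ℝ) :
    Lop t₀ t₁ r K z = C z * evalKernel t₀ t₁ r K t₀ := by
  simp only [Lop, evalKernel, mul_sum, ← mul_assoc, ← C_mul, hK.2.2.1]
  refine sum_congr rfl fun i _ => ?_
  ring_nf

lemma LopE_eq_C_mul_evalKernel (hK : IsLegendreBasis t₀ t₁ K) (r : ℕ) (z : ℝ) :
    LopE t₀ t₁ r K z = C z * evalKernel t₀ t₁ r K t₁ := by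
  simp only [LopE, evalKernel, mul_sum, ← mul_assoc, ← C_mul, hK.2.1]
  refine sum_congr rfl fun i _ => ?_
  ring_nf

/-- The defect `Q = legendreOperator (K j) + j (j + 1) K j` has degree `< j` by
`coeff_legendreOperator` and, the operator being symmetric, is orthogonal to every `K i`
with `i < j`; hence it vanishes. -/
lemma legendreOperator_eq (hK : IsLegendreBasis t₀ t₁ K) (ht : t₀ ≠ t₁) (j : ℕ) :
    legendreOperator t₀ t₁ (K j) = -C (j * (j + 1) : ℝ) * K j := by
  set Q := legendreOperator t₀ t₁ (K j) + C (j * (j + 1) : ℝ) * K j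
  have hQdeg : Q.degree < j := by
    rw [degree_lt_iff_coeff_zero]
    intro k hk
    rcases hk.eq_or_lt with rfl | hk
    · rw [coeff_add, coeff_C_mul, coeff_legendreOperator (hK.1 j).le]
      ring
    · refine coeff_eq_zero_of_natDegree_lt (lt_of_le_of_lt ?_ hk)
      refine natDegree_add_le_of_degree_le ?_ ?_
      · exact (natDegree_legendreOperator_le _).trans (hK.1 j).le
      · exact (natDegree_C_mul_le _ _).trans (hK.1 j).le
  have hQorth : ∀ i < j, intervalPairing t₀ t₁ Q (K i) = 0 := by
    intro i hi
    rw [intervalPairing_add_left, intervalPairing_C_mul_left,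
      intervalPairing_legendreOperator_comm,
      hK.intervalPairing_eq_zero_of_natDegree_lt ht
        ((natDegree_legendreOperator_le _).trans_lt (by rwa [hK.1])),
      intervalPairing_comm, hK.intervalPairing_eq_zero_of_natDegree_lt ht (by rwa [hK.1]),
      mul_zero, add_zero]
  have hQ := hK.eq_zero_of_degree_lt_of_intervalPairing_eq_zero ht hQdeg hQorth
  linear_combination hQ

lemma abs_eval_le_one (hK : IsLegendreBasis t₀ t₁ K) (ht : t₀ ≠ t₁) (i : ℕ) {t : ℝ}
    (htI : t ∈ Set.Icc t₀ t₁) : |(K i).eval t| ≤ 1 := by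
  rcases i.eq_zero_or_pos with rfl | hi
  · have h₁ := hK.2.1 0
    rw [eq_C_of_natDegree_eq_zero (hK.1 0), eval_C] at h₁
    rw [eq_C_of_natDegree_eq_zero (hK.1 0), eval_C, h₁, abs_one]
  · have hα : (0 : ℝ) < i * (i + 1) := by positivity
    have hsq := sq_eval_le_max_of_legendreOperator_eq hα (hK.legendreOperator_eq ht i) htI
    rw [hK.2.2.1, hK.2.1, ← pow_mul, pow_mul', neg_one_sq, one_pow, one_pow, max_self] at hsq
    exact (sq_le_one_iff_abs_le_one _).1 hsq

lemma neg_one_pow_mul_eval_derivativeResolvent_pos (hK : IsLegendreBasis t₀ t₁ K) (ht : t₀ < t₁)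
    {μ : ℝ} (hμ : 0 < μ) (j : ℕ) : 0 < (-1) ^ j * (derivativeResolvent μ (K j)).eval t₀ := by
  rw [derivativeResolvent, eval_finsetSum, mul_sum]
  refine sum_pos (fun n hn => ?_) nonempty_range_add_one
  have hsign := neg_one_pow_mul_eval_iterate_derivative_pos ht (hK.legendreOperator_eq ht.ne j)
    (by rw [hK.2.2.1, ← mul_pow]; norm_num) n
    (by rw [hK.1] at hn; exact mem_range_succ_iff.1 hn)
  calc (0 : ℝ) < μ⁻¹ ^ (n + 1) * ((-1) ^ (j + n) * (derivative^[n] (K j)).eval t₀) := by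
        positivity
    _ = _ := by rw [eval_mul, eval_C, pow_add]; ring

lemma abs_eval_sum_le_eval_left (hK : IsLegendreBasis t₀ t₁ K) (ht : t₀ ≠ t₁) (s : Finset ℕ)
    {c : ℕ → ℝ} (hc : ∀ i ∈ s, 0 ≤ (-1) ^ i * c i) {t : ℝ} (htI : t ∈ Set.Icc t₀ t₁) :
    |(∑ i ∈ s, C (c i) * K i).eval t| ≤ (∑ i ∈ s, C (c i) * K i).eval t₀ := by
  simp only [eval_finsetSum, eval_mul, eval_C, hK.2.2.1]
  refine (abs_sum_le_sum_abs _ _).trans (sum_le_sum fun i hi => ?_)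
  calc |c i * (K i).eval t| ≤ |c i| := by
        rw [abs_mul]; exact mul_le_of_le_one_right (abs_nonneg _) (hK.abs_eval_le_one ht i htI)
    _ = c i * (-1) ^ i := by
        rw [mul_comm, ← abs_eq_self.2 (hc i hi), abs_mul, abs_pow, abs_neg, abs_one, one_pow,
          one_mul]

section DualProblem

variable {r : ℕ} {lam : ℝ} {φ : ℝ[X]}

lemma intervalPairing_derivative_add_C_mul_of_dual (hK : IsLegendreBasis t₀ t₁ K)
    (ht : t₀ ≠ t₁)
    (hφ : derivative φ - C lam * φ - LopE t₀ t₁ r K (φ.eval t₁) = Lop t₀ t₁ r K 1)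
    {V : ℝ[X]} (hV : V.natDegree ≤ r) :
    intervalPairing t₀ t₁ φ (derivative V + C lam * V) = -(1 + φ.eval t₀) * V.eval t₀ := by
  have h := congrArg (fun p => intervalPairing t₀ t₁ p V) hφ
  simp only [intervalPairing_sub_left, hK.Lop_eq_C_mul_evalKernel,
    hK.LopE_eq_C_mul_evalKernel, intervalPairing_C_mul_left,
    hK.intervalPairing_evalKernel ht _ hV] at h
  have hparts := intervalPairing_derivative_add (a := t₀) (b := t₁) φ V
  rw [intervalPairing_comm, intervalPairing_add_left, intervalPairing_C_mul_left,
    intervalPairing_comm, intervalPairing_comm V]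
  linear_combination hparts - h

/-- The Riesz representer in `P^r` of `V ↦ W(t₀)`, where `W' + λ W = V`. -/
noncomputable def dualProfile (t₀ t₁ : ℝ) (r : ℕ) (K : ℕ → ℝ[X]) (lam : ℝ) : ℝ[X] :=
  ∑ j ∈ range (r + 1),
    C ((2 * j + 1) / (t₁ - t₀) * (derivativeResolvent lam (K j)).eval t₀) * K j

lemma eq_C_mul_dualProfile (hK : IsLegendreBasis t₀ t₁ K) (ht : t₀ ≠ t₁) (hlam : lam ≠ 0)
    (hφdeg : φ.natDegree ≤ r)
    (hφ : derivative φ - C lam * φ - LopE t₀ t₁ r K (φ.eval t₁) = Lop t₀ t₁ r K 1) :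
    φ = C (-(1 + φ.eval t₀)) * dualProfile t₀ t₁ r K lam := by
  conv_lhs => rw [hK.eq_sum_legendreCoeff ht
    ((degree_le_of_natDegree_le hφdeg).trans_lt (by exact_mod_cast Nat.lt_succ_self r))]
  rw [dualProfile, mul_sum]
  refine sum_congr rfl fun j hj => ?_
  have hcoeff := hK.intervalPairing_derivative_add_C_mul_of_dual ht hφ
    ((natDegree_derivativeResolvent_le lam (K j)).trans ((hK.1 j).le.trans
      (mem_range_succ_iff.1 hj)))
  rw [derivative_derivativeResolvent_add hlam] at hcoeff
  rw [hcoeff, ← mul_assoc (C _), ← C_mul]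
  ring_nf

lemma neg_one_pow_mul_dualProfile_coeff_pos (hK : IsLegendreBasis t₀ t₁ K) (ht : t₀ < t₁)
    (hlam : 0 < lam) (j : ℕ) :
    0 < (-1) ^ j * ((2 * j + 1) / (t₁ - t₀) * (derivativeResolvent lam (K j)).eval t₀) := by
  have := hK.neg_one_pow_mul_eval_derivativeResolvent_pos ht hlam j
  have : 0 < (2 * j + 1) / (t₁ - t₀) := div_pos (by positivity) (sub_pos.2 ht)
  rw [mul_left_comm]
  positivity

lemma eval_dualProfile_left_pos (hK : IsLegendreBasis t₀ t₁ K) (ht : t₀ < t₁) (hlam : 0 < lam)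
    (r : ℕ) : 0 < (dualProfile t₀ t₁ r K lam).eval t₀ := by
  simp only [dualProfile, eval_finsetSum, eval_mul, eval_C, hK.2.2.1]
  refine sum_pos (fun j _ => ?_) nonempty_range_add_one
  rw [mul_comm]
  exact hK.neg_one_pow_mul_dualProfile_coeff_pos ht hlam j

lemma abs_eval_dualProfile_le (hK : IsLegendreBasis t₀ t₁ K) (ht : t₀ < t₁) (hlam : 0 < lam)
    (r : ℕ) {t : ℝ} (htI : t ∈ Set.Icc t₀ t₁) :
    |(dualProfile t₀ t₁ r K lam).eval t| ≤ (dualProfile t₀ t₁ r K lam).eval t₀ :=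
  hK.abs_eval_sum_le_eval_left ht.ne _
    (fun j _ => (hK.neg_one_pow_mul_dualProfile_coeff_pos ht hlam j).le) htI

end DualProblem

end IsLegendreBasis

/-- Stability of the dG dual solution: `max_{[t₀,t₁]} |φ| = |φ(t₀)|` and `-1 < φ(t₀) < 0`. -/
theorem stmt_4 (t₀ t₁ : ℝ) (ht : t₀ < t₁) (r : ℕ) (K : ℕ → Polynomial ℝ)
    (hK : IsLegendreBasis t₀ t₁ K) (lam : ℝ) (hlam : 0 < lam)
    (φ : Polynomial ℝ) (hφdeg : φ.natDegree ≤ r)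
    (hφ : Polynomial.derivative φ - Polynomial.C lam * φ - LopE t₀ t₁ r K (φ.eval t₁)
      = Lop t₀ t₁ r K 1) :
    IsGreatest ((fun t => |φ.eval t|) '' Set.Icc t₀ t₁) |φ.eval t₀| ∧
    (-1 < φ.eval t₀ ∧ φ.eval t₀ < 0) := by
  set Ψ := IsLegendreBasis.dualProfile t₀ t₁ r K lam
  have hφΨ : ∀ t, φ.eval t = -(1 + φ.eval t₀) * Ψ.eval t := fun t => by
    conv_lhs => rw [hK.eq_C_mul_dualProfile ht.ne hlam.ne' hφdeg hφ]
    rw [eval_mul, eval_C]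
  have hΨ₀ : 0 < Ψ.eval t₀ := hK.eval_dualProfile_left_pos ht hlam r
  have hφ₀ : φ.eval t₀ * (1 + Ψ.eval t₀) = -Ψ.eval t₀ := by linear_combination hφΨ t₀
  refine ⟨⟨⟨t₀, ⟨le_rfl, ht.le⟩, rfl⟩, ?_⟩, by nlinarith, by nlinarith⟩
  rintro _ ⟨t, htI, rfl⟩
  calc |φ.eval t| = |1 + φ.eval t₀| * |Ψ.eval t| := by rw [hφΨ, abs_mul, abs_neg]
    _ ≤ |1 + φ.eval t₀| * Ψ.eval t₀ := by
        gcongr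
        exact hK.abs_eval_dualProfile_le ht hlam r htI
    _ = |φ.eval t₀| := by
        conv_rhs => rw [hφΨ t₀]
        rw [abs_mul, abs_neg, abs_of_pos hΨ₀]
end

section
/- Let λ > 0 and let φ ∈ P^r satisfy φ' − λ φ − L̂(φ(t₁)) = L(1) on I. Then the leading rescaled Legendre coefficient a_r = ((2r+1)/k) ∫_I φ K_r dt satisfies |a_r| ≤ (1 + λk/(2(2r+1)))^{−1}. -/
open Polynomial MeasureTheory intervalIntegral

/-! Testing the equation against `K r` (which is orthogonal to `φ'`, of degree `< r`) and using
that `L`, `L̂` represent evaluation at `t₀`, `t₁` on `P^r` gives `φ(t₁) = -(-1)^r - β a_r` with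
`β = λk/(2r+1)`. Testing it against `φ` gives the energy identity
`φ(t₁)² + (φ(t₀) + 1)² + 2λ‖φ‖² = 1`, and Bessel's inequality `a_r² k/(2r+1) ≤ ‖φ‖²` turns it
into `((-1)^r + β a_r)² + 2β a_r² ≤ 1`, a quadratic constraint forcing `|a_r| ≤ 2/(2+β)`. -/
noncomputable def l2Pairing (t₀ t₁ : ℝ) : ℝ[X] →ₗ[ℝ] ℝ[X] →ₗ[ℝ] ℝ :=
  LinearMap.mk₂ ℝ (fun p q => ∫ t in t₀..t₁, p.eval t * q.eval t)
    (fun p₁ p₂ q => by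
      simp only [eval_add, add_mul]
      exact integral_add ((p₁.continuous.mul q.continuous).intervalIntegrable _ _)
        ((p₂.continuous.mul q.continuous).intervalIntegrable _ _))
    (fun c p q => by
      simp only [eval_smul, smul_eq_mul, mul_assoc, intervalIntegral.integral_const_mul])
    (fun p q₁ q₂ => by
      simp only [eval_add, mul_add]
      exact integral_add ((p.continuous.mul q₁.continuous).intervalIntegrable _ _)
        ((p.continuous.mul q₂.continuous).intervalIntegrable _ _))
    (fun c p q => by
      simp only [eval_smul, smul_eq_mul, mul_left_comm, intervalIntegral.integral_const_mul])

section l2Pairing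

variable {t₀ t₁ : ℝ}

theorem l2Pairing_apply (p q : ℝ[X]) :
    l2Pairing t₀ t₁ p q = ∫ t in t₀..t₁, p.eval t * q.eval t := rfl

theorem l2Pairing_comm (p q : ℝ[X]) : l2Pairing t₀ t₁ p q = l2Pairing t₀ t₁ q p := by
  simp only [l2Pairing_apply, mul_comm]

theorem l2Pairing_self_nonneg (h : t₀ ≤ t₁) (p : ℝ[X]) : 0 ≤ l2Pairing t₀ t₁ p p :=
  integral_nonneg h fun _ _ => mul_self_nonneg _

theorem l2Pairing_derivative_self (p : ℝ[X]) :
    l2Pairing t₀ t₁ (derivative p) p = (p.eval t₁ ^ 2 - p.eval t₀ ^ 2) / 2 := by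
  have hderiv : ∀ t, HasDerivAt (fun t => p.eval t * p.eval t / 2)
      ((derivative p).eval t * p.eval t) t := fun t =>
    (((p.hasDerivAt t).mul (p.hasDerivAt t)).div_const 2).congr_deriv (by ring)
  rw [l2Pairing_apply, integral_eq_sub_of_hasDerivAt (fun t _ => hderiv t)
    (((derivative p).continuous.mul p.continuous).intervalIntegrable _ _)]
  ring

end l2Pairing

noncomputable def legendreCoeff (t₀ t₁ : ℝ) (K : ℕ → ℝ[X]) (m : ℕ) (p : ℝ[X]) : ℝ :=
  (2 * (m : ℝ) + 1) / (t₁ - t₀) * l2Pairing t₀ t₁ p (K m)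

theorem l2Pairing_eq_legendreCoeff_mul {t₀ t₁ : ℝ} (K : ℕ → ℝ[X]) (ht : t₀ ≠ t₁) (m : ℕ)
    (p : ℝ[X]) :
    l2Pairing t₀ t₁ p (K m) = legendreCoeff t₀ t₁ K m p * ((t₁ - t₀) / (2 * (m : ℝ) + 1)) := by
  rw [legendreCoeff]
  field_simp [sub_ne_zero.mpr ht.symm]

namespace IsLegendreBasis

variable {t₀ t₁ : ℝ} {K : ℕ → ℝ[X]}

theorem degree_eq (hK : IsLegendreBasis t₀ t₁ K) (i : ℕ) : (K i).degree = i := by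
  have hne : K i ≠ 0 := fun h => by simpa [h] using hK.2.1 i
  rw [degree_eq_natDegree hne, hK.1 i]

noncomputable def toSequence (hK : IsLegendreBasis t₀ t₁ K) : Polynomial.Sequence ℝ :=
  ⟨K, hK.degree_eq⟩

theorem eqOn_degreeLT (hK : IsLegendreBasis t₀ t₁ K) {m : ℕ} {f g : ℝ[X] →ₗ[ℝ] ℝ}
    (h : ∀ i < m, f (K i) = g (K i)) :
    Set.EqOn f g (degreeLT ℝ m) := by
  have hspan := hK.toSequence.span_degreeLT (m := m) fun i _ =>
    (leadingCoeff_ne_zero.mpr (hK.toSequence.ne_zero i)).isUnit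
  rw [← hspan]
  exact LinearMap.eqOn_span' fun _ ⟨i, hi, hKi⟩ => hKi ▸ h i hi

theorem l2Pairing_eq_zero_of_degree_lt (hK : IsLegendreBasis t₀ t₁ K) {m : ℕ} {p : ℝ[X]}
    (hp : p.degree < m) :
    l2Pairing t₀ t₁ p (K m) = 0 := by
  refine hK.eqOn_degreeLT (f := (l2Pairing t₀ t₁).flip (K m)) (g := 0)
    (fun i hi => ?_) (mem_degreeLT.mpr hp)
  simp [l2Pairing_apply, hK.2.2.2, hi.ne]

theorem l2Pairing_sum_legendre (hK : IsLegendreBasis t₀ t₁ K) {r : ℕ} (w : ℕ → ℝ) {j : ℕ}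
    (hj : j ≤ r) :
    l2Pairing t₀ t₁ (K j) (∑ i ∈ Finset.range (r + 1), C (w i * (2 * (i : ℝ) + 1)) * K i)
      = (t₁ - t₀) * w j := by
  simp only [map_sum, ← smul_eq_C_mul, map_smul, l2Pairing_apply, hK.2.2.2, smul_eq_mul,
    mul_ite, mul_zero, Finset.sum_ite_eq, Finset.mem_range, Nat.lt_succ_of_le hj, if_true]
  field_simp

-- `∑ (2i+1) K_i(s) K_i / k` is the reproducing kernel of `P^r` for evaluation at `s`;
-- `Lop` and `LopE` are its multiples for `s = t₀` and `s = t₁`.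
theorem l2Pairing_sum_legendre_eq_eval (hK : IsLegendreBasis t₀ t₁ K) {r : ℕ} {s : ℝ}
    {w : ℕ → ℝ} (hw : ∀ i ≤ r, w i = (K i).eval s) {V : ℝ[X]} (hV : V.natDegree ≤ r) :
    l2Pairing t₀ t₁ (∑ i ∈ Finset.range (r + 1), C (w i * (2 * (i : ℝ) + 1)) * K i) V
      = (t₁ - t₀) * V.eval s := by
  refine hK.eqOn_degreeLT (m := r + 1) (f := l2Pairing t₀ t₁ _) (g := (t₁ - t₀) • leval s)
    (fun i hi => ?_) (mem_degreeLT.mpr ?_)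
  · have hir : i ≤ r := Nat.le_of_lt_succ hi
    rw [l2Pairing_comm, hK.l2Pairing_sum_legendre w hir, hw i hir]
    rfl
  · exact (degree_le_of_natDegree_le hV).trans_lt (by exact_mod_cast r.lt_succ_self)

theorem l2Pairing_Lop (hK : IsLegendreBasis t₀ t₁ K) (ht : t₀ ≠ t₁) {r : ℕ} (z : ℝ) {V : ℝ[X]}
    (hV : V.natDegree ≤ r) : l2Pairing t₀ t₁ (Lop t₀ t₁ r K z) V = z * V.eval t₀ := by
  rw [Lop, ← smul_eq_C_mul, map_smul, LinearMap.smul_apply,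
    hK.l2Pairing_sum_legendre_eq_eval (fun i _ => by rw [hK.2.2.1]) hV, smul_eq_mul]
  field_simp [sub_ne_zero.mpr ht.symm]

theorem l2Pairing_LopE (hK : IsLegendreBasis t₀ t₁ K) (ht : t₀ ≠ t₁) {r : ℕ} (z : ℝ) {V : ℝ[X]}
    (hV : V.natDegree ≤ r) : l2Pairing t₀ t₁ (LopE t₀ t₁ r K z) V = z * V.eval t₁ := by
  have hsum := hK.l2Pairing_sum_legendre_eq_eval (w := fun _ => 1) (fun i _ => (hK.2.1 i).symm) hV
  simp only [one_mul] at hsum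
  rw [LopE, ← smul_eq_C_mul, map_smul, LinearMap.smul_apply, hsum, smul_eq_mul]
  field_simp [sub_ne_zero.mpr ht.symm]

theorem legendreCoeff_sq_mul_le (hK : IsLegendreBasis t₀ t₁ K) (ht : t₀ < t₁) (m : ℕ)
    (p : ℝ[X]) :
    legendreCoeff t₀ t₁ K m p ^ 2 * ((t₁ - t₀) / (2 * (m : ℝ) + 1)) ≤ l2Pairing t₀ t₁ p p := by
  set a := legendreCoeff t₀ t₁ K m p
  have hpK := l2Pairing_eq_legendreCoeff_mul K ht.ne m p
  have hKK : l2Pairing t₀ t₁ (K m) (K m) = (t₁ - t₀) / (2 * (m : ℝ) + 1) := by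
    simp [l2Pairing_apply, hK.2.2.2]
  have hnonneg := l2Pairing_self_nonneg ht.le (p - a • K m)
  simp only [map_sub, map_smul, LinearMap.sub_apply, LinearMap.smul_apply, smul_eq_mul,
    l2Pairing_comm (K m) p, hpK, hKK] at hnonneg
  linarith

end IsLegendreBasis

theorem Polynomial.degree_derivative_lt_of_natDegree_le {R : Type*} [Semiring R] {p : R[X]}
    {n : ℕ} (hp : p.natDegree ≤ n) : (derivative p).degree < n := by
  rcases eq_or_ne p 0 with rfl | hne
  · simp
  · exact (degree_derivative_lt hne).trans_le (degree_le_of_natDegree_le hp)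

theorem abs_le_two_div_of_sq_add_le {a β ε : ℝ} (hβ : 0 < β) (hε : |ε| = 1)
    (h : (ε + β * a) ^ 2 + 2 * β * a ^ 2 ≤ 1) : |a| ≤ 2 / (2 + β) := by
  have hε2 : ε ^ 2 = 1 := by rw [← sq_abs, hε, one_pow]
  have hquad : (2 + β) * |a| ^ 2 ≤ 2 * |a| := by
    have : β * ((2 + β) * a ^ 2 + 2 * ε * a) ≤ 0 := by nlinarith
    have hεa : -(ε * a) ≤ |a| := by
      simpa [abs_mul, hε] using neg_le_abs (ε * a)
    rw [sq_abs]
    nlinarith [nonpos_of_mul_nonpos_right this hβ]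
  rw [le_div_iff₀ (by linarith)]
  rcases (abs_nonneg a).eq_or_lt with ha | ha
  · rw [← ha]; simp
  · nlinarith

/-- Bound on the leading rescaled Legendre coefficient of the dG dual solution:
`|a_r| ≤ (1 + λ k / (2 (2 r + 1)))⁻¹`. -/
theorem stmt_7 (t₀ t₁ : ℝ) (ht : t₀ < t₁) (r : ℕ) (K : ℕ → Polynomial ℝ)
    (hK : IsLegendreBasis t₀ t₁ K) (lam : ℝ) (hlam : 0 < lam)
    (φ : Polynomial ℝ) (hφdeg : φ.natDegree ≤ r)
    (hφ : Polynomial.derivative φ - Polynomial.C lam * φ - LopE t₀ t₁ r K (φ.eval t₁)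
      = Lop t₀ t₁ r K 1) :
    |(2 * (r : ℝ) + 1) / (t₁ - t₀) * ∫ t in t₀..t₁, φ.eval t * (K r).eval t|
      ≤ (1 + lam * (t₁ - t₀) / (2 * (2 * (r : ℝ) + 1)))⁻¹ := by
  have htest : ∀ V : ℝ[X], V.natDegree ≤ r →
      l2Pairing t₀ t₁ (derivative φ) V - lam * l2Pairing t₀ t₁ φ V - φ.eval t₁ * V.eval t₁
        = V.eval t₀ := fun V hV => by
    simpa only [map_sub, ← smul_eq_C_mul, map_smul, LinearMap.sub_apply, LinearMap.smul_apply,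
      smul_eq_mul, hK.l2Pairing_Lop ht.ne _ hV, hK.l2Pairing_LopE ht.ne _ hV, one_mul]
      using congrArg (fun p => l2Pairing t₀ t₁ p V) hφ
  have hKr := htest (K r) (hK.1 r).le
  rw [hK.l2Pairing_eq_zero_of_degree_lt (degree_derivative_lt_of_natDegree_le hφdeg),
    l2Pairing_eq_legendreCoeff_mul K ht.ne, hK.2.1, hK.2.2.1] at hKr
  have hφφ := htest φ hφdeg
  rw [l2Pairing_derivative_self] at hφφ
  have hBessel := mul_le_mul_of_nonneg_left (hK.legendreCoeff_sq_mul_le ht r φ) hlam.le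
  set a := legendreCoeff t₀ t₁ K r φ
  set β := lam * ((t₁ - t₀) / (2 * (r : ℝ) + 1))
  have hβ : 0 < β := by positivity
  have hcoeff : (-1) ^ r + β * a = -φ.eval t₁ := by linarith
  have henergy : φ.eval t₁ ^ 2 + 2 * β * a ^ 2 ≤ 1 := by
    nlinarith [sq_nonneg (φ.eval t₀ + 1)]
  have hbound := abs_le_two_div_of_sq_add_le hβ (abs_neg_one_pow r) (a := a)
    (by rw [hcoeff, neg_sq]; exact henergy)
  have hrhs : (1 + lam * (t₁ - t₀) / (2 * (2 * (r : ℝ) + 1)))⁻¹ = 2 / (2 + β) := by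
    simp only [β]
    field_simp
  rw [hrhs]
  exact hbound
end
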